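/- Let Δ be a flag normal (d-1)-pseudomanifold and let σ = τ_1 ∪ τ_2 be a facet of Δ where τ_1 is an i-face and τ_2 is a (d-i-2)-face. Then V(lk_Δ τ_1) ∪ V(lk_Δ τ_2) = V(Δ) if and only if Δ = lk_Δ τ_1 * lk_Δ τ_2. -/

import Mathlib

open Finset

/-- An abstract simplicial complex on vertex type `V`, given by a finite,
downward-closed family of finite faces containing the empty face. -/
structure SC (V : Type*) [DecidableEq V] where
  faces : Finset (Finset V)
  empty_mem : ∅ ∈ faces
  down_closed : ∀ ⦃σ τ : Finset V⦄, σ ∈ faces → τ ⊆ σ → τ ∈ faces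

namespace SC

variable {V : Type*} [DecidableEq V]

/-- The vertex set of a complex. -/
def vertexSet (Δ : SC V) : Finset V := Δ.faces.sup id

/-- `fNum Δ i` is the number of `i`-dimensional faces (faces of cardinality `i+1`). -/
def fNum (Δ : SC V) (i : ℕ) : ℕ := (Δ.faces.filter fun σ => σ.card = i + 1).card

/-- A complex is flag if it is the clique complex of its graph, i.e. every set of
vertices which is pairwise joined by edges is a face (equivalently, all minimal
non-faces have cardinality two). -/
def IsFlag (Δ : SC V) : Prop :=
  ∀ σ : Finset V, (∀ u ∈ σ, ∀ v ∈ σ, ({u, v} : Finset V) ∈ Δ.faces) → σ ∈ Δ.faces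

/-- The restriction `Δ[W]` of `Δ` to a set `W` of vertices. -/
def restrict (Δ : SC V) (W : Finset V) : SC V where
  faces := Δ.faces.filter fun σ => σ ⊆ W
  empty_mem := by simp [Δ.empty_mem]
  down_closed := by
    intro σ τ hσ hτ
    simp only [mem_filter] at hσ ⊢
    exact ⟨Δ.down_closed hσ.1 hτ, hτ.trans hσ.2⟩

/-- The link of a face `σ` in `Δ`. -/
def link (Δ : SC V) (σ : Finset V) : SC V where
  faces := insert ∅ (Δ.faces.filter fun τ => Disjoint τ σ ∧ τ ∪ σ ∈ Δ.faces)
  empty_mem := mem_insert_self _ _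
  down_closed := by
    intro τ ρ hτ hρ
    rcases mem_insert.1 hτ with h | h
    · subst h
      simp [Finset.subset_empty.1 hρ]
    · simp only [mem_filter] at h
      refine mem_insert.2 (Or.inr ?_)
      simp only [mem_filter]
      exact ⟨Δ.down_closed h.1 hρ, h.2.1.mono_left hρ,
        Δ.down_closed h.2.2 (Finset.union_subset_union hρ Finset.Subset.rfl)⟩

/-- A facet is a maximal face. -/
def IsFacet (Δ : SC V) (σ : Finset V) : Prop :=
  σ ∈ Δ.faces ∧ ∀ τ ∈ Δ.faces, σ ⊆ τ → σ = τ

/-- `Δ` is pure of dimension `D`: all faces have dimension at most `D` and all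
facets have dimension exactly `D`. -/
def Pure (Δ : SC V) (D : ℕ) : Prop :=
  (∀ σ ∈ Δ.faces, σ.card ≤ D + 1) ∧ (∃ σ ∈ Δ.faces, σ.card = D + 1) ∧
    ∀ σ : Finset V, Δ.IsFacet σ → σ.card = D + 1

/-- The graph (1-skeleton) of a complex. -/
def graph (Δ : SC V) : SimpleGraph V where
  Adj u v := u ≠ v ∧ ({u, v} : Finset V) ∈ Δ.faces
  symm := by
    constructor
    intro u v h
    exact ⟨h.1.symm, by rw [Finset.pair_comm]; exact h.2⟩
  loopless := by constructor; intro u h; exact h.1 rfl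

/-- A complex is connected if its vertex set is nonempty and any two vertices are
joined by a path in its graph. -/
def Connected (Δ : SC V) : Prop :=
  Δ.vertexSet.Nonempty ∧ ∀ u ∈ Δ.vertexSet, ∀ v ∈ Δ.vertexSet, Δ.graph.Reachable u v

/-- The reduced Euler characteristic `χ̃(Δ) = -1 + f₀ - f₁ + f₂ - ⋯`. -/
def redChar (Δ : SC V) : ℤ := -∑ σ ∈ Δ.faces, (-1 : ℤ) ^ σ.card

/-- `Δ` is an Eulerian complex of dimension `D`: it is pure of dimension `D` and the
reduced Euler characteristic of the link of every face `σ` (including `σ = ∅`)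
equals `(-1) ^ (dim lk σ)`, written multiplicatively to avoid signed dimensions. -/
def IsEulerian (Δ : SC V) (D : ℕ) : Prop :=
  Δ.Pure D ∧ ∀ σ ∈ Δ.faces, (Δ.link σ).redChar * (-1) ^ σ.card = (-1) ^ D

/-- A weak pseudomanifold of dimension `D`: pure and every ridge ((D-1)-face) lies
in exactly two facets. -/
def IsWeakPseudo (Δ : SC V) (D : ℕ) : Prop :=
  Δ.Pure D ∧ ∀ σ ∈ Δ.faces, σ.card = D →
    (Δ.faces.filter fun τ => σ ⊆ τ ∧ τ.card = D + 1).card = 2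

/-- A normal pseudomanifold of dimension `D`: a connected weak pseudomanifold all of
whose links of faces of dimension `≤ D - 2` are connected. -/
def IsNormalPseudo (Δ : SC V) (D : ℕ) : Prop :=
  Δ.IsWeakPseudo D ∧ Δ.Connected ∧
    ∀ σ ∈ Δ.faces, σ.card + 1 ≤ D → (Δ.link σ).Connected

/-- The join of two complexes (on disjoint vertex sets). -/
def join (Δ Γ : SC V) : SC V where
  faces := (Δ.faces ×ˢ Γ.faces).image fun p => p.1 ∪ p.2
  empty_mem := Finset.mem_image.2 ⟨(∅, ∅),
    Finset.mem_product.2 ⟨Δ.empty_mem, Γ.empty_mem⟩, Finset.union_empty ∅⟩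
  down_closed := by
    intro σ τ hσ hτ
    rw [Finset.mem_image] at hσ ⊢
    obtain ⟨⟨a, b⟩, hab, rfl⟩ := hσ
    rw [Finset.mem_product] at hab
    refine ⟨(τ ∩ a, τ ∩ b), Finset.mem_product.2
      ⟨Δ.down_closed hab.1 Finset.inter_subset_right,
       Γ.down_closed hab.2 Finset.inter_subset_right⟩, ?_⟩
    rw [← Finset.inter_union_distrib_left]
    exact Finset.inter_eq_left.2 hτ

/-- The trivial complex, whose only face is the empty face (identity for join). -/
def trivialSC : SC V where
  faces := {∅}
  empty_mem := Finset.mem_singleton_self ∅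
  down_closed := by
    intro σ τ hσ hτ
    simp only [Finset.mem_singleton] at hσ ⊢
    subst hσ
    exact Finset.subset_empty.1 hτ

/-- The join of a finite family of complexes. -/
def bigJoin : {k : ℕ} → (Fin k → SC V) → SC V
  | 0, _ => trivialSC
  | _ + 1, C => (C 0).join (bigJoin fun i => C i.succ)

/-- `Δ` is a cycle (circle) with `n` vertices: a connected, 1-dimensional complex
all of whose vertices have exactly two neighbours. -/
def IsCycle (Δ : SC V) (n : ℕ) : Prop :=
  Δ.vertexSet.card = n ∧ (∀ σ ∈ Δ.faces, σ.card ≤ 2) ∧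
    (∀ v ∈ Δ.vertexSet, (Δ.link {v}).vertexSet.card = 2) ∧ Δ.Connected

/-- `Δ` is the boundary complex of the `d`-dimensional cross-polytope: its vertices
come in `d` antipodal pairs and the faces are exactly the sets containing at most
one vertex of each pair. -/
def IsCrossPolytopeBoundary (Δ : SC V) (d : ℕ) : Prop :=
  ∃ x y : Fin d → V, Function.Injective x ∧ Function.Injective y ∧
    (∀ i j, x i ≠ y j) ∧
    ∀ σ : Finset V, σ ∈ Δ.faces ↔
      ((∀ v ∈ σ, ∃ i, v = x i ∨ v = y i) ∧ ∀ i, ¬(x i ∈ σ ∧ y i ∈ σ))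

/-- `Δ` is a simplicial 2-sphere: a connected weak 2-pseudomanifold whose vertex
links are circles and whose reduced Euler characteristic is 1. -/
def IsSphere2 (Δ : SC V) : Prop :=
  Δ.Connected ∧ Δ.IsWeakPseudo 2 ∧
    (∀ v ∈ Δ.vertexSet, ∃ n, 3 ≤ n ∧ (Δ.link {v}).IsCycle n) ∧ Δ.redChar = 1

/-- `Δ` is a (closed) simplicial 3-manifold: connected, pure of dimension 3, and the
link of every vertex is a simplicial 2-sphere. -/
def Is3Manifold (Δ : SC V) : Prop :=
  Δ.Connected ∧ Δ.Pure 3 ∧ ∀ v ∈ Δ.vertexSet, (Δ.link {v}).IsSphere2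

/-- `Δ` is a disjoint union of cycles, each of length at least 4: it is
1-dimensional, 2-regular and its graph has no triangles. -/
def IsDisjointUnionOfCyclesGe4 (Δ : SC V) : Prop :=
  (∀ σ ∈ Δ.faces, σ.card ≤ 2) ∧
    (∀ v ∈ Δ.vertexSet, (Δ.link {v}).vertexSet.card = 2) ∧
    ∀ u v w : V, ({u, v} : Finset V) ∈ Δ.faces → ({v, w} : Finset V) ∈ Δ.faces →
      ({u, w} : Finset V) ∈ Δ.faces → u = v ∨ v = w ∨ u = w

end SC

/-!
Put `A = V(lk τ₁)` and `B = V(lk τ₂)`. In a flag complex a face whose vertices lie in `A` is a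
face of `lk τ₁`, so when `A ∪ B = V(Δ)` every face of `Δ` splits along `A` into a face of
`lk τ₁` and a face of `lk τ₂`. Conversely, for a facet `F₁` of `lk τ₁` the link `lk F₁` is a
subcomplex of `lk τ₂`; both are normal pseudomanifolds of dimension `i`, and strong connectivity
of normal pseudomanifolds rules out a proper subcomplex of this kind. Hence every face of
`lk τ₂` joins `F₁`.
-/

namespace SC

variable {V : Type*} [DecidableEq V] {Δ : SC V} {D E : ℕ}

@[ext]
theorem ext {Γ : SC V} (h : Δ.faces = Γ.faces) : Δ = Γ := by
  cases Δ; cases Γ; cases h; rfl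

theorem mem_vertexSet {u : V} : u ∈ Δ.vertexSet ↔ {u} ∈ Δ.faces := by
  simp only [vertexSet, mem_sup, id]
  exact ⟨fun ⟨σ, hσ, hu⟩ => Δ.down_closed hσ (singleton_subset_iff.2 hu),
    fun h => ⟨{u}, h, mem_singleton_self u⟩⟩

theorem subset_vertexSet {σ : Finset V} (hσ : σ ∈ Δ.faces) : σ ⊆ Δ.vertexSet :=
  fun _ hu => mem_vertexSet.2 (Δ.down_closed hσ (singleton_subset_iff.2 hu))

theorem mem_link_iff {τ ρ : Finset V} (hτ : τ ∈ Δ.faces) :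
    ρ ∈ (Δ.link τ).faces ↔ Disjoint ρ τ ∧ ρ ∪ τ ∈ Δ.faces := by
  simp only [link, mem_insert, mem_filter]
  constructor
  · rintro (rfl | h)
    · simpa using hτ
    · exact h.2
  · exact fun h => Or.inr ⟨Δ.down_closed h.2 subset_union_left, h⟩

theorem sdiff_mem_link {τ G : Finset V} (hG : G ∈ Δ.faces) (hτG : τ ⊆ G) :
    G \ τ ∈ (Δ.link τ).faces :=
  (mem_link_iff (Δ.down_closed hG hτG)).2
    ⟨sdiff_disjoint, by rwa [sdiff_union_of_subset hτG]⟩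

theorem mem_of_mem_link {τ ρ : Finset V} (hτ : τ ∈ Δ.faces) (hρ : ρ ∈ (Δ.link τ).faces) :
    ρ ∈ Δ.faces :=
  Δ.down_closed ((mem_link_iff hτ).1 hρ).2 subset_union_left

theorem link_empty (Δ : SC V) : Δ.link ∅ = Δ := by
  ext ρ
  simp [mem_link_iff Δ.empty_mem]

theorem link_link {τ σ : Finset V} (hτ : τ ∈ Δ.faces) (hσ : σ ∈ (Δ.link τ).faces) :
    (Δ.link τ).link σ = Δ.link (σ ∪ τ) := by
  obtain ⟨hστ, hστΔ⟩ := (mem_link_iff hτ).1 hσ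
  ext ρ
  rw [mem_link_iff hσ, mem_link_iff hστΔ, mem_link_iff hτ, union_assoc,
    disjoint_union_left, disjoint_union_right]
  tauto

theorem mem_join_iff {Γ : SC V} {σ : Finset V} :
    σ ∈ (Δ.join Γ).faces ↔ ∃ σ₁ ∈ Δ.faces, ∃ σ₂ ∈ Γ.faces, σ₁ ∪ σ₂ = σ := by
  simp [join, and_assoc]

theorem vertexSet_join (Δ Γ : SC V) :
    (Δ.join Γ).vertexSet = Δ.vertexSet ∪ Γ.vertexSet := by
  ext u
  simp only [mem_union, mem_vertexSet, mem_join_iff]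
  constructor
  · rintro ⟨σ₁, h₁, σ₂, h₂, hu⟩
    have hu : u ∈ σ₁ ∪ σ₂ := by rw [hu]; exact mem_singleton_self u
    rcases mem_union.1 hu with hu | hu
    · exact Or.inl (Δ.down_closed h₁ (singleton_subset_iff.2 hu))
    · exact Or.inr (Γ.down_closed h₂ (singleton_subset_iff.2 hu))
  · rintro (h | h)
    · exact ⟨{u}, h, ∅, Γ.empty_mem, union_empty _⟩
    · exact ⟨∅, Δ.empty_mem, {u}, h, empty_union _⟩

theorem IsFlag.mem_link_of_subset_vertexSet (hflag : Δ.IsFlag) {τ σ : Finset V}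
    (hτ : τ ∈ Δ.faces) (hσ : σ ∈ Δ.faces) (hσV : σ ⊆ (Δ.link τ).vertexSet) :
    σ ∈ (Δ.link τ).faces := by
  have hvert : ∀ u ∈ σ, u ∉ τ ∧ {u} ∪ τ ∈ Δ.faces := fun u hu => by
    simpa [mem_link_iff hτ] using mem_vertexSet.1 (hσV hu)
  have hcross : ∀ u ∈ σ, ∀ v ∈ τ, ({u, v} : Finset V) ∈ Δ.faces := fun u hu v hv =>
    Δ.down_closed (hvert u hu).2 (by simp [insert_subset_iff, hv])
  refine (mem_link_iff hτ).2 ⟨disjoint_left.2 fun u hu => (hvert u hu).1, hflag _ ?_⟩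
  intro u hu v hv
  rcases mem_union.1 hu with hu | hu <;> rcases mem_union.1 hv with hv | hv
  · exact Δ.down_closed hσ (by simp [insert_subset_iff, hu, hv])
  · exact hcross u hu v hv
  · rw [pair_comm]; exact hcross v hv u hu
  · exact Δ.down_closed hτ (by simp [insert_subset_iff, hu, hv])

theorem exists_isFacet_superset {σ : Finset V} (hσ : σ ∈ Δ.faces) :
    ∃ G, Δ.IsFacet G ∧ σ ⊆ G := by
  obtain ⟨G, hG, hmax⟩ := exists_max_image (Δ.faces.filter (σ ⊆ ·)) card ⟨σ, by simp [hσ]⟩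
  rw [mem_filter] at hG
  refine ⟨G, ⟨hG.1, fun τ hτ hGτ => ?_⟩, hG.2⟩
  exact eq_of_subset_of_card_le hGτ (hmax τ (mem_filter.2 ⟨hτ, hG.2.trans hGτ⟩))

theorem Pure.exists_superset_card (hΔ : Δ.Pure D) {σ : Finset V} (hσ : σ ∈ Δ.faces) :
    ∃ G ∈ Δ.faces, σ ⊆ G ∧ #G = D + 1 := by
  obtain ⟨G, hG, hσG⟩ := exists_isFacet_superset hσ
  exact ⟨G, hG.1, hσG, hΔ.2.2 G hG⟩

theorem pure_of_forall_exists_superset (hle : ∀ σ ∈ Δ.faces, #σ ≤ D + 1)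
    (hext : ∀ σ ∈ Δ.faces, ∃ G ∈ Δ.faces, σ ⊆ G ∧ #G = D + 1) : Δ.Pure D := by
  refine ⟨hle, ?_, fun σ hσ => ?_⟩
  · obtain ⟨G, hG, -, hGc⟩ := hext ∅ Δ.empty_mem
    exact ⟨G, hG, hGc⟩
  · obtain ⟨G, hG, hσG, hGc⟩ := hext σ hσ.1
    rwa [hσ.2 G hG hσG]

theorem Pure.link (hΔ : Δ.Pure D) {τ : Finset V} (hτ : τ ∈ Δ.faces)
    (hD : E + #τ = D) : (Δ.link τ).Pure E := by
  refine pure_of_forall_exists_superset (fun ρ hρ => ?_) (fun ρ hρ => ?_)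
  · obtain ⟨hρτ, hρτΔ⟩ := (mem_link_iff hτ).1 hρ
    have := hΔ.1 _ hρτΔ
    rw [card_union_of_disjoint hρτ] at this
    omega
  · obtain ⟨hρτ, hρτΔ⟩ := (mem_link_iff hτ).1 hρ
    obtain ⟨G, hG, hρτG, hGc⟩ := hΔ.exists_superset_card hρτΔ
    have hτG : τ ⊆ G := subset_union_right.trans hρτG
    refine ⟨G \ τ, sdiff_mem_link hG hτG,
      subset_sdiff.2 ⟨subset_union_left.trans hρτG, hρτ⟩, ?_⟩
    rw [card_sdiff_of_subset hτG]
    omega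

/-- Connectivity of `Δ` itself is the case `σ = ∅`, demanded only in positive dimension so that
two points count as a normal `0`-pseudomanifold; this makes the notion closed under links. -/
def IsNormal (Δ : SC V) (D : ℕ) : Prop :=
  Δ.IsWeakPseudo D ∧ ∀ σ ∈ Δ.faces, #σ + 1 ≤ D → (Δ.link σ).Connected

theorem IsNormalPseudo.isNormal (h : Δ.IsNormalPseudo D) : Δ.IsNormal D :=
  ⟨h.1, h.2.2⟩

theorem IsWeakPseudo.link (hΔ : Δ.IsWeakPseudo D) {τ : Finset V}
    (hτ : τ ∈ Δ.faces) (hD : E + #τ = D) : (Δ.link τ).IsWeakPseudo E := by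
  refine ⟨hΔ.1.link hτ hD, fun ρ hρ hρc => ?_⟩
  obtain ⟨hρτ, hρτΔ⟩ := (mem_link_iff hτ).1 hρ
  rw [← hΔ.2 _ hρτΔ (by rw [card_union_of_disjoint hρτ]; omega)]
  refine card_nbij' (· ∪ τ) (· \ τ) (fun K hK => ?_) (fun G hG => ?_) (fun K hK => ?_)
    (fun G hG => ?_)
  · simp only [coe_filter, Set.mem_ofPred_eq] at hK ⊢
    obtain ⟨hKτ, hKτΔ⟩ := (mem_link_iff hτ).1 hK.1
    refine ⟨hKτΔ, union_subset_union hK.2.1 subset_rfl, ?_⟩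
    rw [card_union_of_disjoint hKτ]
    omega
  · simp only [coe_filter, Set.mem_ofPred_eq] at hG ⊢
    have hτG : τ ⊆ G := subset_union_right.trans hG.2.1
    refine ⟨sdiff_mem_link hG.1 hτG, subset_sdiff.2 ⟨subset_union_left.trans hG.2.1, hρτ⟩, ?_⟩
    rw [card_sdiff_of_subset hτG]
    omega
  · simp only [coe_filter, Set.mem_ofPred_eq] at hK
    exact union_sdiff_cancel_right ((mem_link_iff hτ).1 hK.1).1
  · simp only [coe_filter, Set.mem_ofPred_eq] at hG
    exact sdiff_union_of_subset (subset_union_right.trans hG.2.1)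

theorem IsNormal.link (hΔ : Δ.IsNormal D) {τ : Finset V} (hτ : τ ∈ Δ.faces)
    (hD : E + #τ = D) : (Δ.link τ).IsNormal E := by
  refine ⟨hΔ.1.link hτ hD, fun σ hσ hσc => ?_⟩
  obtain ⟨hστ, hστΔ⟩ := (mem_link_iff hτ).1 hσ
  rw [link_link hτ hσ]
  exact hΔ.2 _ hστΔ (by rw [card_union_of_disjoint hστ]; omega)

/-- Adjacency in the dual graph: `D`-faces sharing a `(D-1)`-face. -/
def DualAdj (Δ : SC V) (D : ℕ) (X Y : Finset V) : Prop :=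
  X ∈ Δ.faces ∧ Y ∈ Δ.faces ∧ #X = D + 1 ∧ #Y = D + 1 ∧ D ≤ #(X ∩ Y)

theorem DualAdj.union_link {τ X Y : Finset V} (hτ : τ ∈ Δ.faces)
    (h : (Δ.link τ).DualAdj E X Y) : Δ.DualAdj (E + #τ) (X ∪ τ) (Y ∪ τ) := by
  obtain ⟨hX, hY, hXc, hYc, hXY⟩ := h
  obtain ⟨hXτ, hXτΔ⟩ := (mem_link_iff hτ).1 hX
  obtain ⟨hYτ, hYτΔ⟩ := (mem_link_iff hτ).1 hY
  have hXYτ : Disjoint (X ∩ Y) τ := disjoint_of_subset_left inter_subset_left hXτ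
  refine ⟨hXτΔ, hYτΔ, ?_, ?_, ?_⟩
  · rw [card_union_of_disjoint hXτ]; omega
  · rw [card_union_of_disjoint hYτ]; omega
  · rw [← inter_union_distrib_right, card_union_of_disjoint hXYτ]; omega

theorem Pure.reflTransGen_dualAdj_of_star (hpure : Δ.Pure D) (hconn : Δ.Connected)
    (hstar : ∀ u, ∀ H ∈ Δ.faces, ∀ H' ∈ Δ.faces, #H = D + 1 → #H' = D + 1 → u ∈ H → u ∈ H' →
      Relation.ReflTransGen (Δ.DualAdj D) H H')
    {G G' : Finset V} (hG : G ∈ Δ.faces) (hG' : G' ∈ Δ.faces) (hGc : #G = D + 1)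
    (hGc' : #G' = D + 1) : Relation.ReflTransGen (Δ.DualAdj D) G G' := by
  obtain ⟨u, hu⟩ := card_pos.1 (hGc ▸ Nat.succ_pos _ : 0 < #G)
  obtain ⟨u', hu'⟩ := card_pos.1 (hGc' ▸ Nat.succ_pos _ : 0 < #G')
  have hreach := (SimpleGraph.reachable_iff_reflTransGen _ _).1
    (hconn.2 u (subset_vertexSet hG hu) u' (subset_vertexSet hG' hu'))
  suffices ∃ H ∈ Δ.faces, #H = D + 1 ∧ u' ∈ H ∧ Relation.ReflTransGen (Δ.DualAdj D) G H by
    obtain ⟨H, hH, hHc, hu'H, hGH⟩ := this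
    exact hGH.trans (hstar u' H hH G' hG' hHc hGc' hu'H hu')
  clear hu'
  induction hreach with
  | refl => exact ⟨G, hG, hGc, hu, .refl⟩
  | tail _ hvw ih =>
    obtain ⟨H, hH, hHc, hvH, hGH⟩ := ih
    obtain ⟨M, hM, hvwM, hMc⟩ := hpure.exists_superset_card hvw.2
    refine ⟨M, hM, hMc, hvwM (by simp), hGH.trans (hstar _ H hH M hM hHc hMc hvH ?_)⟩
    exact hvwM (by simp)

/-- Facets through a common vertex are joined inside its link. -/
theorem IsNormal.reflTransGen_dualAdj (hΔ : Δ.IsNormal D) {G G' : Finset V}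
    (hG : G ∈ Δ.faces) (hG' : G' ∈ Δ.faces) (hGc : #G = D + 1) (hGc' : #G' = D + 1) :
    Relation.ReflTransGen (Δ.DualAdj D) G G' := by
  induction D generalizing Δ G G' with
  | zero => exact .single ⟨hG, hG', hGc, hGc', Nat.zero_le _⟩
  | succ E ih =>
    refine hΔ.1.1.reflTransGen_dualAdj_of_star ?_ ?_ hG hG' hGc hGc'
    · simpa [link_empty] using hΔ.2 ∅ Δ.empty_mem (by simp)
    · intro u H hH H' hH' hHc hHc' huH huH'
      have huH₁ := singleton_subset_iff.2 huH
      have huH₁' := singleton_subset_iff.2 huH'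
      have hu : {u} ∈ Δ.faces := Δ.down_closed hH huH₁
      have hpath := ih (hΔ.link hu (by simp)) (sdiff_mem_link hH huH₁)
        (sdiff_mem_link hH' huH₁') (by simp [card_sdiff_of_subset huH₁, hHc])
        (by simp [card_sdiff_of_subset huH₁', hHc'])
      have hlift := Relation.ReflTransGen.lift (p := Δ.DualAdj (E + 1)) (· ∪ {u})
        (fun X Y h => by simpa only [card_singleton] using DualAdj.union_link hu h) _ _ hpath
      rwa [Function.onFun, sdiff_union_of_subset huH₁, sdiff_union_of_subset huH₁'] at hlift

theorem IsWeakPseudo.mem_of_dualAdj {Γ Λ : SC V} (hΓ : Γ.IsWeakPseudo D)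
    (hΛ : Λ.IsWeakPseudo D) (hsub : Γ.faces ⊆ Λ.faces) {X Y : Finset V} (hX : X ∈ Γ.faces)
    (hXY : Λ.DualAdj D X Y) : Y ∈ Γ.faces := by
  obtain ⟨-, hY, hXc, hYc, hcap⟩ := hXY
  by_cases hne : X = Y
  · exact hne ▸ hX
  have hRc : #(X ∩ Y) = D := by
    refine le_antisymm (not_lt.1 fun hlt => hne ?_) hcap
    have hXX : X ∩ Y = X := eq_of_subset_of_card_le inter_subset_left (by omega)
    exact eq_of_subset_of_card_le (inter_eq_left.1 hXX) (by omega)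
  have hR : X ∩ Y ∈ Γ.faces := Γ.down_closed hX inter_subset_left
  obtain ⟨Z, hZ, hZX⟩ := exists_mem_ne (by rw [hΓ.2 _ hR hRc]; norm_num) X
  rw [mem_filter] at hZ
  obtain ⟨P, Q, -, hPQ⟩ := card_eq_two.1 (hΛ.2 _ (hsub hR) hRc)
  have hmem : ∀ W ∈ Λ.faces, X ∩ Y ⊆ W → #W = D + 1 → W = P ∨ W = Q := by
    intro W hW hRW hWc
    have : W ∈ Λ.faces.filter (fun τ => X ∩ Y ⊆ τ ∧ #τ = D + 1) := mem_filter.2 ⟨hW, hRW, hWc⟩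
    simpa [hPQ] using this
  have hXPQ := hmem X (hsub hX) inter_subset_left hXc
  have hYPQ := hmem Y hY inter_subset_right hYc
  have hZPQ := hmem Z (hsub hZ.1) hZ.2.1 hZ.2.2
  have hZY : Z = Y := by grind
  exact hZY ▸ hZ.1

/-- A ridge of `Γ` lies in two facets of `Γ` and in only two of `Λ`, so membership in `Γ`
propagates along the dual graph of `Λ`, which is connected. -/
theorem IsNormal.eq_of_faces_subset {Γ Λ : SC V} (hΛ : Λ.IsNormal D)
    (hΓ : Γ.IsWeakPseudo D) (hsub : Γ.faces ⊆ Λ.faces) : Γ = Λ := by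
  obtain ⟨X, hX, hXc⟩ := hΓ.1.2.1
  have hpath : ∀ G, Relation.ReflTransGen (Λ.DualAdj D) X G → G ∈ Γ.faces := by
    intro G h
    induction h with
    | refl => exact hX
    | tail _ hYZ ih => exact hΓ.mem_of_dualAdj hΛ.1 hsub ih hYZ
  refine ext (Subset.antisymm hsub fun σ hσ => ?_)
  obtain ⟨G, hG, hσG, hGc⟩ := hΛ.1.1.exists_superset_card hσ
  exact Γ.down_closed (hpath G (hΛ.reflTransGen_dualAdj (hsub hX) hG hXc hGc)) hσG

section Cover

variable {a b : ℕ} {τ₁ τ₂ : Finset V}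

theorem IsFlag.faces_subset_join_link (hflag : Δ.IsFlag) (hτ₁ : τ₁ ∈ Δ.faces)
    (hτ₂ : τ₂ ∈ Δ.faces)
    (hcover : (Δ.link τ₁).vertexSet ∪ (Δ.link τ₂).vertexSet = Δ.vertexSet) :
    Δ.faces ⊆ ((Δ.link τ₁).join (Δ.link τ₂)).faces := by
  intro F hF
  refine mem_join_iff.2 ⟨F ∩ (Δ.link τ₁).vertexSet,
    hflag.mem_link_of_subset_vertexSet hτ₁ (Δ.down_closed hF inter_subset_left)
      inter_subset_right,
    F \ (Δ.link τ₁).vertexSet,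
    hflag.mem_link_of_subset_vertexSet hτ₂ (Δ.down_closed hF sdiff_subset) fun u hu => ?_,
    by rw [union_comm, sdiff_union_inter]⟩
  rw [mem_sdiff] at hu
  have huV := subset_vertexSet hF hu.1
  rw [← hcover, mem_union] at huV
  exact huV.resolve_left hu.2

/-- Since `F₁` is maximal among faces of `Δ` inside `V(lk τ₁)`, the covering forces
`lk F₁ ⊆ lk τ₂`. -/
theorem IsFlag.link_eq_link_of_vertexSet_cover (hflag : Δ.IsFlag)
    (hΔ : Δ.IsNormal (a + b + 1)) (hτ₁ : τ₁ ∈ Δ.faces) (hτ₂ : τ₂ ∈ Δ.faces)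
    (hc₁ : #τ₁ = a + 1) (hc₂ : #τ₂ = b + 1)
    (hcover : (Δ.link τ₁).vertexSet ∪ (Δ.link τ₂).vertexSet = Δ.vertexSet)
    {F₁ : Finset V} (hF₁ : F₁ ∈ (Δ.link τ₁).faces) (hF₁c : #F₁ = b + 1) :
    Δ.link F₁ = Δ.link τ₂ := by
  have hF₁Δ := mem_of_mem_link hτ₁ hF₁
  refine (hΔ.link (E := a) hτ₂ (by omega)).eq_of_faces_subset (hΔ.1.link hF₁Δ (by omega))
    fun ρ hρ => ?_
  obtain ⟨hρF₁, hρF₁Δ⟩ := (mem_link_iff hF₁Δ).1 hρ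
  refine hflag.mem_link_of_subset_vertexSet hτ₂ (mem_of_mem_link hF₁Δ hρ) fun u hu => ?_
  have huV := subset_vertexSet hρF₁Δ (mem_union_left _ hu)
  rw [← hcover, mem_union] at huV
  refine huV.resolve_left fun huA => ?_
  have hins : insert u F₁ ∈ (Δ.link τ₁).faces :=
    hflag.mem_link_of_subset_vertexSet hτ₁
      (Δ.down_closed hρF₁Δ (insert_subset (mem_union_left _ hu) subset_union_right))
      (insert_subset huA (subset_vertexSet hF₁))
  have := (hΔ.1.1.link (E := b) hτ₁ (by omega)).1 _ hins
  rw [card_insert_of_notMem (disjoint_left.1 hρF₁ hu)] at this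
  omega

theorem IsFlag.eq_join_link_of_vertexSet_cover (hflag : Δ.IsFlag)
    (hΔ : Δ.IsNormal (a + b + 1)) (hτ₁ : τ₁ ∈ Δ.faces) (hτ₂ : τ₂ ∈ Δ.faces)
    (hc₁ : #τ₁ = a + 1) (hc₂ : #τ₂ = b + 1)
    (hcover : (Δ.link τ₁).vertexSet ∪ (Δ.link τ₂).vertexSet = Δ.vertexSet) :
    Δ = (Δ.link τ₁).join (Δ.link τ₂) := by
  refine ext (Subset.antisymm (hflag.faces_subset_join_link hτ₁ hτ₂ hcover) fun σ hσ => ?_)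
  obtain ⟨σ₁, hσ₁, σ₂, hσ₂, rfl⟩ := mem_join_iff.1 hσ
  obtain ⟨F₁, hF₁, hσF₁, hF₁c⟩ :=
    (hΔ.1.1.link (E := b) hτ₁ (by omega)).exists_superset_card hσ₁
  rw [← hflag.link_eq_link_of_vertexSet_cover hΔ hτ₁ hτ₂ hc₁ hc₂ hcover hF₁ hF₁c,
    mem_link_iff (mem_of_mem_link hτ₁ hF₁)] at hσ₂
  exact Δ.down_closed hσ₂.2 (union_subset (hσF₁.trans subset_union_right) subset_union_left)

end Cover

end SC

theorem statement_14_general {V : Type*} [DecidableEq V] (Δ : SC V) (d i : ℕ)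
    (hi : i + 2 ≤ d) (hflag : Δ.IsFlag) (hnp : Δ.IsNormalPseudo (d - 1))
    (τ₁ τ₂ : Finset V) (hfacet : Δ.IsFacet (τ₁ ∪ τ₂))
    (hc1 : τ₁.card = i + 1) (hc2 : τ₂.card = d - i - 1) :
    (Δ.link τ₁).vertexSet ∪ (Δ.link τ₂).vertexSet = Δ.vertexSet ↔
      Δ = (Δ.link τ₁).join (Δ.link τ₂) := by
  obtain ⟨k, rfl⟩ : ∃ k, d = i + k + 2 := ⟨d - (i + 2), by omega⟩
  have hτ₁ : τ₁ ∈ Δ.faces := Δ.down_closed hfacet.1 subset_union_left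
  have hτ₂ : τ₂ ∈ Δ.faces := Δ.down_closed hfacet.1 subset_union_right
  refine ⟨hflag.eq_join_link_of_vertexSet_cover hnp.isNormal hτ₁ hτ₂ hc1 (by omega),
    fun h => ?_⟩
  rw [← SC.vertexSet_join, ← h]

/-- For a flag normal `(d-1)`-pseudomanifold with a facet `σ = τ₁ ∪ τ₂`
where `τ₁` is an `i`-face and `τ₂` a `(d-i-2)`-face, the vertex sets of the links of
`τ₁` and `τ₂` cover all of `V(Δ)` iff `Δ = lk τ₁ * lk τ₂`. -/
theorem statement_14 {V : Type*} [DecidableEq V] (Δ : SC V) (d i : ℕ)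
    (hi : i + 2 ≤ d) (hflag : Δ.IsFlag) (hnp : Δ.IsNormalPseudo (d - 1))
    (τ₁ τ₂ : Finset V) (hdisj : Disjoint τ₁ τ₂) (hfacet : Δ.IsFacet (τ₁ ∪ τ₂))
    (hc1 : τ₁.card = i + 1) (hc2 : τ₂.card = d - i - 1) :
    (Δ.link τ₁).vertexSet ∪ (Δ.link τ₂).vertexSet = Δ.vertexSet ↔
      Δ = (Δ.link τ₁).join (Δ.link τ₂) :=
  statement_14_general Δ d i hi hflag hnp τ₁ τ₂ hfacet hc1 hc2
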